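/- Let A and B be alphabets, let S be a semigroup, and let φ : A⁺ → S and ψ : B⁺ → S be surjective semigroup homomorphisms. If the fiber product Π(φ,ψ) = {(u,v) ∈ A⁺ × B⁺ : φ(u) = ψ(v)} is finitely generated as a semigroup, then S is 𝒥-trivial: for all s, t ∈ S, if there exist x, y, x', y' ∈ S¹ with s = x·t·y and t = x'·s·y', then s = t. -/

import Mathlib

/-!
A finite generating set of `Π(φ, ψ)` gives a constant `M` with `|v| ≤ M |u|` for every
`(u, v) ∈ Π(φ, ψ)`; fixing one `u ∈ φ⁻¹(s)` therefore bounds the lengths of the words in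
`ψ⁻¹(s)`. If `s = x t y` and `t = x' s y'` then `s = (x x') s (y' y)`, and unless both factors
are `1`, wrapping a word of `ψ⁻¹(s)` in preimages of them produces a strictly longer word of
`ψ⁻¹(s)`, so these lengths are unbounded. Hence `x x' = y' y = 1`, which in `S¹` forces
`x = y = 1`, i.e. `s = t`.
-/

/-- The fiber product of two semigroup homomorphisms with common codomain,
as a subsemigroup of the direct product. -/
def fiberSubsemigroup {S T F : Type*} [Semigroup S] [Semigroup T] [Semigroup F]
    (φ : S →ₙ* F) (ψ : T →ₙ* F) : Subsemigroup (S × T) where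
  carrier := {p | φ p.1 = ψ p.2}
  mul_mem' := by
    intro a b ha hb
    simp only [Set.mem_setOf_eq, Prod.fst_mul, Prod.snd_mul, map_mul] at *
    rw [ha, hb]

/-- A subsemigroup is finitely generated if it is the closure of a finite subset. -/
def SubsemigroupFG {M : Type*} [Mul M] (P : Subsemigroup M) : Prop :=
  ∃ X : Set M, X.Finite ∧ Subsemigroup.closure X = P

theorem WithOne.eq_one_and_eq_one_of_mul_eq_one {α : Type*} [Mul α] :
    ∀ {a b : WithOne α}, a * b = 1 → a = 1 ∧ b = 1
  | 1, 1, _ => ⟨rfl, rfl⟩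
  | 1, (b : α), h => absurd h WithOne.coe_ne_one
  | (a : α), 1, h => absurd h WithOne.coe_ne_one
  | (a : α), (b : α), h => absurd h WithOne.coe_ne_one

namespace FreeSemigroup

variable {A B : Type*}

theorem length_pos (w : FreeSemigroup A) : 0 < w.length :=
  Nat.succ_pos _

theorem exists_length_snd_le_mul_length_fst
    {P : Subsemigroup (FreeSemigroup A × FreeSemigroup B)} (hP : SubsemigroupFG P) :
    ∃ M : ℕ, ∀ p ∈ P, p.2.length ≤ M * p.1.length := by
  obtain ⟨X, hX, rfl⟩ := hP
  obtain ⟨M, hM⟩ := (hX.image fun p => p.2.length).bddAbove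
  refine ⟨M, fun p hp => ?_⟩
  induction hp using Subsemigroup.closure_induction with
  | mem p hp =>
    calc p.2.length ≤ M := hM ⟨p, hp, rfl⟩
      _ ≤ M * p.1.length := Nat.le_mul_of_pos_right M p.1.length_pos
  | mul p q _ _ hp hq =>
    simp only [Prod.fst_mul, Prod.snd_mul, length_mul, Nat.mul_add]
    exact Nat.add_le_add hp hq

end FreeSemigroup

section
variable {A B S : Type*} [Semigroup S]

open FreeSemigroup

theorem exists_length_bound_of_fiberSubsemigroup_fg
    {φ : FreeSemigroup A →ₙ* S} {ψ : FreeSemigroup B →ₙ* S} (hφ : Function.Surjective φ)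
    (h : SubsemigroupFG (fiberSubsemigroup φ ψ)) (s : S) :
    ∃ N : ℕ, ∀ w, ψ w = s → w.length ≤ N := by
  obtain ⟨M, hM⟩ := exists_length_snd_le_mul_length_fst h
  obtain ⟨p, hp⟩ := hφ s
  exact ⟨M * p.length, fun w hw => hM (p, w) (hp.trans hw.symm)⟩

variable {ψ : FreeSemigroup B →ₙ* S}

theorem exists_longer_preimage (hψ : Function.Surjective ψ) {s : S} :
    ∀ {u v : WithOne S}, (s : WithOne S) = u * s * v → ¬(u = 1 ∧ v = 1) →
      ∀ w, ψ w = s → ∃ w', ψ w' = s ∧ w.length < w'.length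
  | 1, 1, _, huv, _, _ => absurd ⟨rfl, rfl⟩ huv
  | 1, (b : S), hs, _, w, hw => by
    obtain ⟨d, rfl⟩ := hψ b
    refine ⟨w * d, ?_, ?_⟩
    · rw [map_mul, hw]; exact WithOne.coe_injective (by simpa using hs.symm)
    · have := d.length_pos; rw [length_mul]; omega
  | (a : S), 1, hs, _, w, hw => by
    obtain ⟨c, rfl⟩ := hψ a
    refine ⟨c * w, ?_, ?_⟩
    · rw [map_mul, hw]; exact WithOne.coe_injective (by simpa using hs.symm)
    · have := c.length_pos; rw [length_mul]; omega
  | (a : S), (b : S), hs, _, w, hw => by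
    obtain ⟨c, rfl⟩ := hψ a
    obtain ⟨d, rfl⟩ := hψ b
    refine ⟨c * w * d, ?_, ?_⟩
    · rw [map_mul, map_mul, hw]; exact WithOne.coe_injective (by simpa using hs.symm)
    · have := c.length_pos; have := d.length_pos; rw [length_mul, length_mul]; omega

theorem exists_preimage_le_length (hψ : Function.Surjective ψ) {s : S} {u v : WithOne S}
    (hs : (s : WithOne S) = u * s * v) (huv : ¬(u = 1 ∧ v = 1)) :
    ∀ n : ℕ, ∃ w, ψ w = s ∧ n ≤ w.length
  | 0 => (hψ s).imp fun _ hw => ⟨hw, Nat.zero_le _⟩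
  | n + 1 => by
    obtain ⟨w, hw, hn⟩ := exists_preimage_le_length hψ hs huv n
    obtain ⟨w', hw', hlt⟩ := exists_longer_preimage hψ hs huv w hw
    exact ⟨w', hw', by omega⟩

variable {φ : FreeSemigroup A →ₙ* S}

theorem eq_one_and_eq_one_of_coe_eq_mul_mul (hφ : Function.Surjective φ)
    (hψ : Function.Surjective ψ) (h : SubsemigroupFG (fiberSubsemigroup φ ψ)) {s : S}
    {u v : WithOne S} (hs : (s : WithOne S) = u * s * v) : u = 1 ∧ v = 1 := by
  by_contra huv
  obtain ⟨N, hN⟩ := exists_length_bound_of_fiberSubsemigroup_fg hφ h s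
  obtain ⟨w, hw, hNw⟩ := exists_preimage_le_length hψ hs huv (N + 1)
  exact absurd (hN w hw) (by omega)

end

/-- if the fiber product of two free semigroups over a semigroup
`S` is finitely generated, then `S` is `𝒥`-trivial: whenever `s = x·t·y` and
`t = x'·s·y'` with `x, y, x', y' ∈ S¹` (here `S¹ = WithOne S`, `S` with an
identity adjoined), then `s = t`. -/
theorem stmt10 {A B S : Type} [Semigroup S]
    (φ : FreeSemigroup A →ₙ* S) (ψ : FreeSemigroup B →ₙ* S)
    (hφ : Function.Surjective φ) (hψ : Function.Surjective ψ)
    (h : SubsemigroupFG (fiberSubsemigroup φ ψ)) :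
    ∀ s t : S,
      (∃ x y : WithOne S, (s : WithOne S) = x * (t : WithOne S) * y) →
      (∃ x' y' : WithOne S, (t : WithOne S) = x' * (s : WithOne S) * y') →
      s = t := by
  rintro s t ⟨x, y, hs⟩ ⟨x', y', ht⟩
  have hss : (s : WithOne S) = (x * x') * s * (y' * y) := by
    conv_lhs => rw [hs, ht]
    simp only [mul_assoc]
  obtain ⟨hxx', hy'y⟩ := eq_one_and_eq_one_of_coe_eq_mul_mul hφ hψ h hss
  obtain ⟨rfl, -⟩ := WithOne.eq_one_and_eq_one_of_mul_eq_one hxx'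
  obtain ⟨-, rfl⟩ := WithOne.eq_one_and_eq_one_of_mul_eq_one hy'y
  exact WithOne.coe_injective (by simpa using hs)
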